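/- Let $v > 0$ be smooth on an open set in $\mathbb{R}^m$ ($m>2$), $b = v^{1/(2-m)}$, $d = 2m|\nabla b|^2$, $\psi = b^m \Delta v$, and $B = \mathrm{Hess}_{b^2} - \frac{\Delta b^2}{m}\delta_{ij}$. Then $\Delta d + 2(2-m)\langle \nabla \log b, \nabla d\rangle = \frac{m}{b^2}|B|^2 + \frac{4m}{2-m}\langle \nabla \log b, \nabla \psi\rangle + \frac{2 d \psi}{(2-m)b^2} + \frac{4\psi^2}{(2-m)^2 b^2}$. -/

import Mathlib

open Real MeasureTheory Filter
open scoped RealInnerProductSpace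

/-- The Euclidean Laplacian: sum of pure second derivatives in coordinate directions. -/
noncomputable def lap {m : ℕ} (g : EuclideanSpace ℝ (Fin m) → ℝ)
    (x : EuclideanSpace ℝ (Fin m)) : ℝ :=
  ∑ i : Fin m, iteratedFDeriv ℝ 2 g x ![EuclideanSpace.single i 1, EuclideanSpace.single i 1]

/-- Entry `(i,j)` of the Hessian matrix of `g` at `x`. -/
noncomputable def hess {m : ℕ} (g : EuclideanSpace ℝ (Fin m) → ℝ)
    (x : EuclideanSpace ℝ (Fin m)) (i j : Fin m) : ℝ :=
  iteratedFDeriv ℝ 2 g x ![EuclideanSpace.single i 1, EuclideanSpace.single j 1]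

section Toolbox
open scoped ContDiff

variable {m : ℕ}

noncomputable def pd (i : Fin m) (g : EuclideanSpace ℝ (Fin m) → ℝ)
    (x : EuclideanSpace ℝ (Fin m)) : ℝ :=
  fderiv ℝ g x (EuclideanSpace.single i 1)

lemma pd_def (i : Fin m) (g : EuclideanSpace ℝ (Fin m) → ℝ) (x : EuclideanSpace ℝ (Fin m)) :
    pd i g x = fderiv ℝ g x (EuclideanSpace.single i 1) := rfl

variable {U : Set (EuclideanSpace ℝ (Fin m))} {f g : EuclideanSpace ℝ (Fin m) → ℝ}
  {x : EuclideanSpace ℝ (Fin m)} {i : Fin m}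

lemma pd_congr (h : f =ᶠ[nhds x] g) (i : Fin m) : pd i f x = pd i g x := by
  rw [pd_def, pd_def, h.fderiv_eq]

lemma evEq (hU : IsOpen U) (hx : x ∈ U) (h : ∀ y ∈ U, f y = g y) : f =ᶠ[nhds x] g :=
  Filter.eventuallyEq_of_mem (hU.mem_nhds hx) h

lemma pd_add (hf : DifferentiableAt ℝ f x) (hg : DifferentiableAt ℝ g x) :
    pd i (fun y => f y + g y) x = pd i f x + pd i g x := by
  rw [pd_def, fderiv_fun_add hf hg]; rfl

lemma pd_mul (hf : DifferentiableAt ℝ f x) (hg : DifferentiableAt ℝ g x) :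
    pd i (fun y => f y * g y) x = pd i f x * g x + f x * pd i g x := by
  rw [pd_def, fderiv_fun_mul hf hg]
  simp [pd_def]; ring

lemma pd_const_mul (hf : DifferentiableAt ℝ f x) (c : ℝ) :
    pd i (fun y => c * f y) x = c * pd i f x := by
  rw [pd_def, fderiv_const_mul hf c]; rfl

lemma pd_sq (hf : DifferentiableAt ℝ f x) :
    pd i (fun y => f y ^ 2) x = 2 * f x * pd i f x := by
  have : (fun y => f y ^ 2) = fun y => f y * f y := by funext y; ring
  rw [this, pd_mul hf hf]; ring

lemma pd_sum {ι : Type*} (s : Finset ι) (F : ι → EuclideanSpace ℝ (Fin m) → ℝ)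
    (h : ∀ j ∈ s, DifferentiableAt ℝ (F j) x) :
    pd i (fun y => ∑ j ∈ s, F j y) x = ∑ j ∈ s, pd i (F j) x := by
  rw [pd_def, fderiv_fun_sum h]; simp [pd_def]

lemma pd_zpow (k : ℤ) (hf : DifferentiableAt ℝ f x) (hne : f x ≠ 0) :
    pd i (fun y => f y ^ k) x = (k : ℝ) * f x ^ (k - 1) * pd i f x := by
  have h := (hasDerivAt_zpow k (f x) (Or.inl hne)).comp_hasFDerivAt x hf.hasFDerivAt
  have h2 : HasFDerivAt (fun y => f y ^ k) ((↑k * f x ^ (k - 1)) • fderiv ℝ f x) x := h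
  rw [pd_def, h2.fderiv]; simp [pd_def, mul_assoc]

lemma pd_log (hf : DifferentiableAt ℝ f x) (hne : f x ≠ 0) :
    pd i (fun y => Real.log (f y)) x = (f x)⁻¹ * pd i f x := by
  have h := (Real.hasDerivAt_log hne).comp_hasFDerivAt x hf.hasFDerivAt
  have h2 : HasFDerivAt (fun y => Real.log (f y)) ((f x)⁻¹ • fderiv ℝ f x) x := h
  rw [pd_def, h2.fderiv]; simp [pd_def]

lemma contDiffAt_of_on (hU : IsOpen U) (hg : ContDiffOn ℝ (⊤ : ℕ∞) g U) (hx : x ∈ U)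
    {n : WithTop ℕ∞} (hn : n ≤ ∞ := by exact WithTop.coe_le_coe.mpr le_top) :
    ContDiffAt ℝ n g x :=
  ((hg x hx).contDiffAt (hU.mem_nhds hx)).of_le hn

lemma diffAt_of_on (hU : IsOpen U) (hg : ContDiffOn ℝ (⊤ : ℕ∞) g U) (hx : x ∈ U) :
    DifferentiableAt ℝ g x :=
  (contDiffAt_of_on hU hg hx (n := 1)).differentiableAt one_ne_zero

lemma contDiffOn_pd (hU : IsOpen U) (hg : ContDiffOn ℝ (⊤ : ℕ∞) g U) (i : Fin m) :
    ContDiffOn ℝ (⊤ : ℕ∞) (pd i g) U := by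
  have h1 : ContDiffOn ℝ (⊤ : ℕ∞) (fderiv ℝ g) U := hg.fderiv_of_isOpen hU (by simp)
  exact h1.clm_apply contDiffOn_const

lemma inner_gradient_eq (g : EuclideanSpace ℝ (Fin m) → ℝ) (x u : EuclideanSpace ℝ (Fin m)) :
    ⟪gradient g x, u⟫ = fderiv ℝ g x u := by
  simp [gradient, InnerProductSpace.toDual_symm_apply]

lemma gradient_apply (g : EuclideanSpace ℝ (Fin m) → ℝ) (x : EuclideanSpace ℝ (Fin m)) (i : Fin m) :
    gradient g x i = pd i g x := by
  have h := inner_gradient_eq g x (EuclideanSpace.single i 1)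
  rw [real_inner_comm, EuclideanSpace.inner_single_left] at h
  simpa [pd_def] using h

lemma inner_gradient_gradient (g h : EuclideanSpace ℝ (Fin m) → ℝ) (x : EuclideanSpace ℝ (Fin m)) :
    ⟪gradient g x, gradient h x⟫ = ∑ i, pd i g x * pd i h x := by
  rw [PiLp.inner_apply]
  simp [gradient_apply, mul_comm]

lemma norm_gradient_sq (g : EuclideanSpace ℝ (Fin m) → ℝ) (x : EuclideanSpace ℝ (Fin m)) :
    ‖gradient g x‖ ^ 2 = ∑ i, pd i g x ^ 2 := by
  rw [← real_inner_self_eq_norm_sq, inner_gradient_gradient]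
  simp [sq]

lemma pd_pd_eq_snd (g : EuclideanSpace ℝ (Fin m) → ℝ) (x : EuclideanSpace ℝ (Fin m))
    (hg : ContDiffAt ℝ 2 g x) (i j : Fin m) :
    pd i (pd j g) x
      = fderiv ℝ (fderiv ℝ g) x (EuclideanSpace.single i 1) (EuclideanSpace.single j 1) := by
  have hdf : DifferentiableAt ℝ (fderiv ℝ g) x :=
    (hg.fderiv_right (m := 1) le_rfl).differentiableAt one_ne_zero
  have : pd j g = fun y => (fderiv ℝ g y) (EuclideanSpace.single j 1) := rfl
  rw [pd_def, this, fderiv_clm_apply hdf (differentiableAt_const _)]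
  simp

lemma hess_eq_pd (g : EuclideanSpace ℝ (Fin m) → ℝ) (x : EuclideanSpace ℝ (Fin m))
    (hg : ContDiffAt ℝ 2 g x) (i j : Fin m) :
    hess g x i j = pd i (pd j g) x := by
  rw [hess, iteratedFDeriv_two_apply, pd_pd_eq_snd g x hg]
  simp

lemma lap_eq_pd (g : EuclideanSpace ℝ (Fin m) → ℝ) (x : EuclideanSpace ℝ (Fin m))
    (hg : ContDiffAt ℝ 2 g x) :
    lap g x = ∑ i, pd i (pd i g) x := by
  unfold lap
  refine Finset.sum_congr rfl fun i _ => ?_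
  rw [iteratedFDeriv_two_apply, pd_pd_eq_snd g x hg]
  simp

lemma pd_symm (g : EuclideanSpace ℝ (Fin m) → ℝ) (x : EuclideanSpace ℝ (Fin m))
    (hg : ContDiffAt ℝ 2 g x) (i j : Fin m) :
    pd i (pd j g) x = pd j (pd i g) x := by
  rw [pd_pd_eq_snd g x hg, pd_pd_eq_snd g x hg]
  exact hg.isSymmSndFDerivAt (by simp) _ _

end Toolbox

/-- Differential identity for `d = 2m|∇b|²` where `b = v^(1/(2-m))`, `ψ = bᵐ Δv` and
`B = Hess_{b²} - (Δb²/m) δᵢⱼ`: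
`Δd + 2(2-m)⟨∇ log b, ∇d⟩ = (m/b²)|B|² + (4m/(2-m))⟨∇ log b, ∇ψ⟩ + 2dψ/((2-m)b²)
  + 4ψ²/((2-m)²b²)`. -/
theorem stmt_10 (m : ℕ) (hm : 2 < m) (U : Set (EuclideanSpace ℝ (Fin m))) (hU : IsOpen U)
    (v b d ψ : EuclideanSpace ℝ (Fin m) → ℝ)
    (hv : ContDiffOn ℝ (⊤ : ℕ∞) v U) (hvpos : ∀ x ∈ U, 0 < v x)
    (hb : ∀ x, b x = v x ^ ((1 : ℝ) / (2 - (m : ℝ))))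
    (hd : ∀ x, d x = 2 * m * ‖gradient b x‖ ^ 2)
    (hψ : ∀ x, ψ x = b x ^ m * lap v x)
    (x : EuclideanSpace ℝ (Fin m)) (hx : x ∈ U) :
    lap d x + 2 * (2 - (m : ℝ)) * ⟪gradient (fun y => Real.log (b y)) x, gradient d x⟫ =
      (m : ℝ) / b x ^ 2 *
          (∑ i, ∑ j, (hess (fun y => b y ^ 2) x i j -
            (if i = j then lap (fun y => b y ^ 2) x / m else 0)) ^ 2) +
        4 * m / (2 - (m : ℝ)) * ⟪gradient (fun y => Real.log (b y)) x, gradient ψ x⟫ +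
        2 * d x * ψ x / ((2 - (m : ℝ)) * b x ^ 2) +
        4 * ψ x ^ 2 / ((2 - (m : ℝ)) ^ 2 * b x ^ 2) := by
  classical
  have hm2 : (2:ℝ) < m := by exact_mod_cast hm
  have hm0 : (m:ℝ) ≠ 0 := by positivity
  have hc : (2 - (m:ℝ)) ≠ 0 := by linarith
  have hbpos : ∀ y ∈ U, 0 < b y := fun y hy => by
    rw [hb]; exact Real.rpow_pos_of_pos (hvpos y hy) _
  have hβ : b x ≠ 0 := (hbpos x hx).ne'
  set Q0 : ℝ := ∑ i, pd i b x ^ 2 with hQ0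
  set T0 : ℝ := ∑ i, pd i (pd i b) x with hT0
  set S0 : ℝ := ∑ j, ∑ i, pd j b x * pd i b x * pd j (pd i b) x with hS0
  set H0 : ℝ := ∑ j, ∑ i, pd j (pd i b) x ^ 2 with hH0
  set R0 : ℝ := ∑ i, pd i b x * (∑ j, pd j (pd j (pd i b)) x) with hR0
  have hbU : ContDiffOn ℝ (⊤ : ℕ∞) b U := by
    have hbf : b = fun y => v y ^ ((1:ℝ)/(2-(m:ℝ))) := funext hb
    rw [hbf]
    intro y hy
    exact (Real.contDiffAt_rpow_const_of_ne (hvpos y hy).ne').comp_contDiffWithinAt y (hv y hy)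
  have DB : ∀ y ∈ U, DifferentiableAt ℝ b y := fun y hy => diffAt_of_on hU hbU hy
  have hPU : ∀ i : Fin m, ContDiffOn ℝ (⊤ : ℕ∞) (pd i b) U := fun i => contDiffOn_pd hU hbU i
  have DP : ∀ (i : Fin m), ∀ y ∈ U, DifferentiableAt ℝ (pd i b) y :=
    fun i y hy => diffAt_of_on hU (hPU i) hy
  have hPPU : ∀ i j : Fin m, ContDiffOn ℝ (⊤ : ℕ∞) (pd i (pd j b)) U :=
    fun i j => contDiffOn_pd hU (hPU j) i
  have DPP : ∀ (i j : Fin m), ∀ y ∈ U, DifferentiableAt ℝ (pd i (pd j b)) y :=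
    fun i j y hy => diffAt_of_on hU (hPPU i j) hy
  have hQU : ContDiffOn ℝ (⊤ : ℕ∞) (fun y => ∑ i, pd i b y ^ 2) U :=
    ContDiffOn.sum fun i _ => (hPU i).pow 2
  have hdfun : d = fun y => 2*(m:ℝ)*(∑ i, pd i b y ^ 2) :=
    funext fun y => by rw [hd y, norm_gradient_sq]
  have hdU : ContDiffOn ℝ (⊤ : ℕ∞) d U := by rw [hdfun]; exact contDiffOn_const.mul hQU
  have hpdd : ∀ (j : Fin m), ∀ y ∈ U, pd j d y = 4*(m:ℝ) * ∑ i, pd i b y * pd j (pd i b) y := by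
    intro j y hy
    have h1 : pd j d y = 2*(m:ℝ) * pd j (fun z => ∑ i, pd i b z ^ 2) y := by
      rw [hdfun]; exact pd_const_mul (diffAt_of_on hU hQU hy) _
    have h2 : pd j (fun z => ∑ i, pd i b z ^ 2) y = ∑ i, 2 * pd i b y * pd j (pd i b) y := by
      rw [pd_sum Finset.univ (fun i z => pd i b z ^ 2) (fun i _ => (DP i y hy).pow 2)]
      exact Finset.sum_congr rfl fun i _ => pd_sq (DP i y hy)
    rw [h1, h2, Finset.mul_sum, Finset.mul_sum]
    exact Finset.sum_congr rfl fun i _ => by ring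
  have hsym3 : ∀ i j : Fin m, pd i (pd j (pd j b)) x = pd j (pd j (pd i b)) x := by
    intro i j
    have h1 : pd i (pd j (pd j b)) x = pd j (pd i (pd j b)) x :=
      pd_symm (pd j b) x (contDiffAt_of_on hU (hPU j) hx) i j
    have h2 : pd i (pd j b) =ᶠ[nhds x] pd j (pd i b) :=
      evEq hU hx fun y hy => pd_symm b y (contDiffAt_of_on hU hbU hy) i j
    rw [h1, pd_congr h2 j]
  have g1 : lap d x = 4*(m:ℝ)*(H0+R0) := by
    have h3 : ∀ j : Fin m, pd j (pd j d) x
        = 4*(m:ℝ) * ∑ i, (pd j (pd i b) x * pd j (pd i b) x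
            + pd i b x * pd j (pd j (pd i b)) x) := by
      intro j
      have he : pd j d =ᶠ[nhds x] (fun y => 4*(m:ℝ) * ∑ i, pd i b y * pd j (pd i b) y) :=
        evEq hU hx (hpdd j)
      rw [pd_congr he j]
      have hDsum : DifferentiableAt ℝ (fun y => ∑ i, pd i b y * pd j (pd i b) y) x :=
        DifferentiableAt.fun_sum fun i _ => (DP i x hx).mul (DPP j i x hx)
      rw [pd_const_mul hDsum]
      congr 1
      rw [pd_sum Finset.univ (fun i y => pd i b y * pd j (pd i b) y)
        (fun i _ => (DP i x hx).mul (DPP j i x hx))]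
      exact Finset.sum_congr rfl fun i _ => pd_mul (DP i x hx) (DPP j i x hx)
    rw [lap_eq_pd d x (contDiffAt_of_on hU hdU hx)]
    rw [Finset.sum_congr rfl fun j _ => h3 j, hH0, hR0]
    rw [← Finset.mul_sum]
    congr 1
    rw [Finset.sum_comm (f := fun j i => pd j (pd i b) x ^ 2)]
    rw [Finset.sum_comm (f := fun j i => pd j (pd i b) x * pd j (pd i b) x
      + pd i b x * pd j (pd j (pd i b)) x)]
    rw [← Finset.sum_add_distrib]
    refine Finset.sum_congr rfl fun i _ => ?_
    rw [Finset.sum_add_distrib, Finset.mul_sum]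
    refine congrArg₂ (· + ·) (Finset.sum_congr rfl fun j _ => by ring) rfl
  have hloggrad : ∀ i : Fin m, pd i (fun y => Real.log (b y)) x = (b x)⁻¹ * pd i b x :=
    fun i => pd_log (DB x hx) hβ
  have g2 : ⟪gradient (fun y => Real.log (b y)) x, gradient d x⟫ = (b x)⁻¹*(4*(m:ℝ)*S0) := by
    rw [inner_gradient_gradient, hS0]
    have hstep : ∀ j : Fin m, pd j (fun y => Real.log (b y)) x * pd j d x
        = ∑ i, (b x)⁻¹ * (4*(m:ℝ) * (pd j b x * pd i b x * pd j (pd i b) x)) := by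
      intro j
      rw [hloggrad j, hpdd j x hx]
      simp only [Finset.mul_sum]
      exact Finset.sum_congr rfl fun i _ => by ring
    rw [Finset.sum_congr rfl fun j _ => hstep j]
    simp only [Finset.mul_sum]
  have hb2U : ContDiffOn ℝ (⊤ : ℕ∞) (fun y => b y ^ 2) U := hbU.pow 2
  have hpdb2 : ∀ (j : Fin m), ∀ y ∈ U, pd j (fun z => b z ^ 2) y = 2 * (b y * pd j b y) := by
    intro j y hy; rw [pd_sq (DB y hy)]; ring
  have hhess : ∀ i j : Fin m, hess (fun y => b y ^ 2) x i j
      = 2*(pd i b x * pd j b x) + 2*(b x * pd i (pd j b) x) := by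
    intro i j
    rw [hess_eq_pd _ x (contDiffAt_of_on hU hb2U hx)]
    have he : pd j (fun z => b z ^ 2) =ᶠ[nhds x] fun y => 2 * (b y * pd j b y) :=
      evEq hU hx (hpdb2 j)
    rw [pd_congr he i, pd_const_mul ((DB x hx).fun_mul (DP j x hx)), pd_mul (DB x hx) (DP j x hx)]
    ring
  have hlapb2 : lap (fun y => b y ^ 2) x = 2*(Q0 + b x * T0) := by
    rw [lap_eq_pd _ x (contDiffAt_of_on hU hb2U hx)]
    have hstep : ∀ i : Fin m, pd i (pd i (fun y => b y ^ 2)) x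
        = 2*(pd i b x * pd i b x) + 2*(b x * pd i (pd i b) x) := by
      intro i
      rw [← hess_eq_pd _ x (contDiffAt_of_on hU hb2U hx), hhess i i]
    rw [Finset.sum_congr rfl fun i _ => hstep i, Finset.sum_add_distrib, hQ0, hT0, mul_add]
    congr 1
    · rw [Finset.mul_sum]; exact Finset.sum_congr rfl fun i _ => by ring
    · rw [Finset.mul_sum, Finset.mul_sum]
  have g3 : (∑ i, ∑ j, (hess (fun y => b y ^ 2) x i j -
        (if i = j then lap (fun y => b y ^ 2) x / m else 0)) ^ 2)
      = 4*Q0^2 + 8*(b x)*S0 + 4*(b x)^2*H0 - 4*(Q0+b x*T0)*(2*(Q0+b x*T0)/m)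
        + m*(2*(Q0+b x*T0)/m)^2 := by
    simp only [hhess, hlapb2]
    set K : ℝ := 2*(Q0 + b x*T0)/(m:ℝ) with hK
    have hterm : ∀ i j : Fin m,
        (2*(pd i b x * pd j b x) + 2*(b x * pd i (pd j b) x) - (if i = j then K else 0))^2
        = (4*(pd i b x^2 * pd j b x^2) + 8*(b x*(pd i b x*pd j b x*pd i (pd j b) x))
            + 4*(b x^2*pd i (pd j b) x^2))
          - (if i = j then 2*K*(2*(pd i b x*pd j b x)+2*(b x*pd i (pd j b) x)) - K^2 else 0) := by
      intro i j; split_ifs with h <;> ring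
    rw [Finset.sum_congr rfl fun i _ => Finset.sum_congr rfl fun j _ => hterm i j]
    simp only [Finset.sum_sub_distrib]
    have hite : ∀ i : Fin m, (∑ j, if i = j
          then 2*K*(2*(pd i b x*pd j b x)+2*(b x*pd i (pd j b) x)) - K^2 else 0)
        = 2*K*(2*(pd i b x*pd i b x)+2*(b x*pd i (pd i b) x)) - K^2 := by
      intro i; rw [Finset.sum_ite_eq]; simp
    rw [Finset.sum_congr rfl fun i (_ : i ∈ Finset.univ) => hite i]
    have e1 : (∑ i, ∑ j, 4*(pd i b x^2*pd j b x^2)) = 4*(Q0*Q0) := by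
      rw [hQ0, Finset.sum_mul_sum]
      simp only [Finset.mul_sum]
      try exact Finset.sum_congr rfl fun i _ => Finset.sum_congr rfl fun j _ => by ring
    have e2 : (∑ i, ∑ j, 8*(b x*(pd i b x*pd j b x*pd i (pd j b) x))) = 8*(b x*S0) := by
      rw [hS0]; simp only [Finset.mul_sum]
      try exact Finset.sum_congr rfl fun i _ => Finset.sum_congr rfl fun j _ => by ring
    have e3 : (∑ i, ∑ j, 4*(b x^2*pd i (pd j b) x^2)) = 4*(b x^2*H0) := by
      rw [hH0]; simp only [Finset.mul_sum]
      try exact Finset.sum_congr rfl fun i _ => Finset.sum_congr rfl fun j _ => by ring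
    have hA : (∑ i, ∑ j, (4*(pd i b x^2*pd j b x^2)
          + 8*(b x*(pd i b x*pd j b x*pd i (pd j b) x)) + 4*(b x^2*pd i (pd j b) x^2)))
        = 4*(Q0*Q0) + 8*(b x*S0) + 4*(b x^2*H0) := by
      simp only [Finset.sum_add_distrib]
      rw [e1, e2, e3]
    have f1 : (∑ i : Fin m, 2*K*(2*(pd i b x*pd i b x))) = 2*K*(2*Q0) := by
      rw [hQ0]; simp only [Finset.mul_sum]
      try exact Finset.sum_congr rfl fun i _ => by ring
    have f2 : (∑ i : Fin m, 2*K*(2*(b x*pd i (pd i b) x))) = 2*K*(2*(b x*T0)) := by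
      rw [hT0]; simp only [Finset.mul_sum]
      try exact Finset.sum_congr rfl fun i _ => by ring
    have f3 : (∑ _i : Fin m, K^2) = (m:ℝ)*K^2 := by
      simp [Finset.sum_const, Finset.card_univ, mul_comm]
    have hB : (∑ i : Fin m, (2*K*(2*(pd i b x*pd i b x)+2*(b x*pd i (pd i b) x)) - K^2))
        = 2*K*(2*Q0+2*(b x*T0)) - (m:ℝ)*K^2 := by
      calc (∑ i : Fin m, (2*K*(2*(pd i b x*pd i b x)+2*(b x*pd i (pd i b) x)) - K^2))
          = ∑ i : Fin m, (2*K*(2*(pd i b x*pd i b x))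
              + 2*K*(2*(b x*pd i (pd i b) x)) - K^2) :=
            Finset.sum_congr rfl fun i _ => by ring
        _ = 2*K*(2*Q0) + 2*K*(2*(b x*T0)) - (m:ℝ)*K^2 := by
            rw [Finset.sum_sub_distrib, Finset.sum_add_distrib, f1, f2, f3]
        _ = 2*K*(2*Q0+2*(b x*T0)) - (m:ℝ)*K^2 := by ring
    rw [hA, hB]
    ring
  have hvb : ∀ y ∈ U, v y = b y ^ ((2:ℤ) - m) := by
    intro y hy
    have h2 : (0:ℝ) < v y := hvpos y hy
    rw [hb y, ← Real.rpow_intCast (v y ^ ((1:ℝ)/(2-(m:ℝ)))) ((2:ℤ) - m),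
      ← Real.rpow_mul h2.le]
    rw [show (1:ℝ)/(2-(m:ℝ)) * (((2:ℤ) - (m:ℤ) : ℤ):ℝ) = 1 by push_cast; field_simp]
    exact (Real.rpow_one _).symm
  have hpdv : ∀ (i : Fin m), ∀ y ∈ U,
      pd i v y = (((2:ℤ) - m : ℤ):ℝ) * (b y ^ ((2:ℤ) - m - 1) * pd i b y) := by
    intro i y hy
    rw [pd_congr (evEq hU hy hvb) i, pd_zpow _ (DB y hy) (hbpos y hy).ne']
    ring
  have hψU : ∀ y ∈ U, ψ y = (2-(m:ℝ))*((2-(m:ℝ))-1)*(∑ i, pd i b y ^ 2)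
      + (2-(m:ℝ))*(b y * ∑ i, pd i (pd i b) y) := by
    intro y hy
    have hby : b y ≠ 0 := (hbpos y hy).ne'
    have hzp : DifferentiableAt ℝ (fun z => b z ^ ((2:ℤ) - m - 1)) y :=
      (DB y hy).zpow (Or.inl hby)
    have hpdiv : ∀ i : Fin m, pd i (pd i v) y
        = (((2:ℤ)-m:ℤ):ℝ) * (((((2:ℤ)-m-1:ℤ)):ℝ) * b y ^ ((2:ℤ)-m-2) * pd i b y * pd i b y
            + b y ^ ((2:ℤ)-m-1) * pd i (pd i b) y) := by
      intro i
      have he : pd i v =ᶠ[nhds y]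
          fun z => (((2:ℤ)-m:ℤ):ℝ) * (b z ^ ((2:ℤ)-m-1) * pd i b z) :=
        evEq hU hy (hpdv i)
      rw [pd_congr he i, pd_const_mul (hzp.fun_mul (DP i y hy)),
        pd_mul hzp (DP i y hy), pd_zpow _ (DB y hy) hby]
      rw [show (2:ℤ) - m - 1 - 1 = (2:ℤ) - m - 2 by ring]
      try ring
    have e1 : b y ^ m * b y ^ ((2:ℤ)-m-2) = 1 := by
      rw [← zpow_natCast (b y) m, ← zpow_add₀ hby,
        show (m:ℤ) + ((2:ℤ)-m-2) = 0 by ring, zpow_zero]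
    have e2 : b y ^ m * b y ^ ((2:ℤ)-m-1) = b y := by
      rw [← zpow_natCast (b y) m, ← zpow_add₀ hby,
        show (m:ℤ) + ((2:ℤ)-m-1) = 1 by ring, zpow_one]
    have hterm : ∀ i : Fin m, b y ^ m * pd i (pd i v) y
        = (2-(m:ℝ))*((2-(m:ℝ))-1)*(pd i b y ^ 2) + (2-(m:ℝ))*(b y * pd i (pd i b) y) := by
      intro i
      rw [hpdiv i]
      push_cast
      linear_combination ((2-(m:ℝ))*((2-(m:ℝ))-1)*pd i b y*pd i b y) * e1
        + ((2-(m:ℝ))*pd i (pd i b) y) * e2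
    calc ψ y = ∑ i, b y ^ m * pd i (pd i v) y := by
          rw [hψ y, lap_eq_pd v y (contDiffAt_of_on hU hv hy), Finset.mul_sum]
      _ = ∑ i, ((2-(m:ℝ))*((2-(m:ℝ))-1)*(pd i b y ^ 2)
            + (2-(m:ℝ))*(b y * pd i (pd i b) y)) :=
          Finset.sum_congr rfl fun i _ => hterm i
      _ = (2-(m:ℝ))*((2-(m:ℝ))-1)*(∑ i, pd i b y ^ 2)
            + (2-(m:ℝ))*(b y * ∑ i, pd i (pd i b) y) := by
          rw [Finset.sum_add_distrib, ← Finset.mul_sum]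
          congr 1
          rw [Finset.mul_sum, Finset.mul_sum]
          try exact Finset.sum_congr rfl fun i _ => by ring
  have g5 : ψ x = (2-(m:ℝ))*((2-(m:ℝ))-1)*Q0 + (2-(m:ℝ))*(b x*T0) := by
    rw [hψU x hx, hQ0, hT0]
  have hTdiff : DifferentiableAt ℝ (fun y => ∑ i, pd i (pd i b) y) x :=
    DifferentiableAt.fun_sum fun i _ => DPP i i x hx
  have hQdiff : DifferentiableAt ℝ (fun y => ∑ i, pd i b y ^ 2) x :=
    DifferentiableAt.fun_sum fun i _ => (DP i x hx).pow 2
  have hpdψ : ∀ i : Fin m, pd i ψ x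
      = (2-(m:ℝ))*((2-(m:ℝ))-1)*(∑ j, 2 * pd j b x * pd i (pd j b) x)
        + (2-(m:ℝ))*(pd i b x * T0 + b x * (∑ j, pd j (pd j (pd i b)) x)) := by
    intro i
    have he : ψ =ᶠ[nhds x] fun y => (2-(m:ℝ))*((2-(m:ℝ))-1)*(∑ j, pd j b y ^ 2)
        + (2-(m:ℝ))*(b y * ∑ j, pd j (pd j b) y) := evEq hU hx hψU
    rw [pd_congr he i]
    rw [pd_add (hQdiff.const_mul _) (((DB x hx).fun_mul hTdiff).const_mul _)]
    rw [pd_const_mul hQdiff, pd_const_mul ((DB x hx).fun_mul hTdiff),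
      pd_mul (DB x hx) hTdiff]
    rw [pd_sum Finset.univ (fun j y => pd j b y ^ 2) (fun j _ => (DP j x hx).pow 2)]
    rw [pd_sum Finset.univ (fun j y => pd j (pd j b) y) (fun j _ => DPP j j x hx)]
    rw [Finset.sum_congr rfl fun j (_ : j ∈ Finset.univ) => pd_sq (DP j x hx)]
    rw [Finset.sum_congr rfl fun j (_ : j ∈ Finset.univ) => hsym3 i j]
    try rw [hT0]
  have g4 : ⟪gradient (fun y => Real.log (b y)) x, gradient ψ x⟫
      = (b x)⁻¹*((2-(m:ℝ))*((2-(m:ℝ))-1)*(2*S0) + (2-(m:ℝ))*(Q0*T0 + b x*R0)) := by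
    rw [inner_gradient_gradient]
    rw [Finset.sum_congr rfl fun i (_ : i ∈ Finset.univ) => by rw [hloggrad i, hpdψ i]]
    rw [hS0, hQ0, hR0]
    simp only [Finset.mul_sum, Finset.sum_mul, mul_add, add_mul, Finset.sum_add_distrib]
    congr 1
    · try exact Finset.sum_congr rfl fun i _ => Finset.sum_congr rfl fun j _ => by ring
    · congr 1
      · exact Finset.sum_congr rfl fun i _ => by ring
      · exact Finset.sum_congr rfl fun i _ => Finset.sum_congr rfl fun j _ => by ring
  have g6 : d x = 2*(m:ℝ)*Q0 := by
    rw [hd x, norm_gradient_sq]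
  rw [g1, g2, g3, g4, g5, g6]
  field_simp
  ring
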